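/- Let α < 0, β > 0 with α + β > 1, and suppose ψ is nondecreasing and convex, with Ψ(x) := ψ(e^x) also nondecreasing and convex. Then the GAB entropy ε_GAB^{(α,β),ψ}(p) = (1/(αβ))·ψ(Σᵢ pᵢ^α) − (1/(β(α+β)))·ψ(Σᵢ pᵢ^(α+β)) is concave on the set of probability vectors with strictly positive entries. -/

import Mathlib

open Finset

/-! For `α < 0` and `α + β ≥ 1` both power sums `p ↦ ∑ i, p i ^ α` and `p ↦ ∑ i, p i ^ (α + β)`
are convex on the positive orthant, hence so are their images under the nondecreasing convex `ψ`.
The coefficient `1 / (α * β)` is negative and `1 / (β * (α + β))` positive, so the entropy is a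
concave function minus a convex one. -/

section

variable {𝕜 E α β : Type*} [Semiring 𝕜] [PartialOrder 𝕜] [AddCommMonoid E] [SMul 𝕜 E]
  [AddCommMonoid α] [PartialOrder α] [SMul 𝕜 α] [AddCommMonoid β] [PartialOrder β] [SMul 𝕜 β]

theorem ConvexOn.comp_of_monotone {s : Set E} {f : E → β} {g : β → α}
    (hg : ConvexOn 𝕜 Set.univ g) (hg' : Monotone g) (hf : ConvexOn 𝕜 s f) :
    ConvexOn 𝕜 s (g ∘ f) :=
  ⟨hf.1, fun _ hx _ hy _ _ ha hb hab =>
    (hg' (hf.2 hx hy ha hb hab)).trans (hg.2 trivial trivial ha hb hab)⟩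

end

section

variable {𝕜 E : Type*} [Field 𝕜] [LinearOrder 𝕜] [IsStrictOrderedRing 𝕜]
  [AddCommGroup E] [Module 𝕜 E]

theorem ConvexOn.concaveOn_const_mul_of_nonpos {s : Set E} {f : E → 𝕜} {c : 𝕜} (hc : c ≤ 0)
    (hf : ConvexOn 𝕜 s f) : ConcaveOn 𝕜 s fun x => c * f x := by
  simpa [Pi.neg_def] using (hf.smul (neg_nonneg.2 hc)).neg

theorem ConvexOn.sum_comp_pi {ι : Type*} [Fintype ι] {I : Set 𝕜} {φ : 𝕜 → 𝕜}
    (hφ : ConvexOn 𝕜 I φ) :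
    ConvexOn 𝕜 (Set.univ.pi fun _ : ι => I) fun p => ∑ i, φ (p i) := by
  refine ⟨convex_pi fun _ _ => hφ.1, fun x hx y hy a b ha hb hab => ?_⟩
  simp only [Pi.add_apply, Pi.smul_apply, smul_eq_mul, mul_sum, ← sum_add_distrib]
  exact sum_le_sum fun i _ => hφ.2 (hx i trivial) (hy i trivial) ha hb hab

end

theorem convex_positive_simplex (ι : Type*) [Fintype ι] :
    Convex ℝ {p : ι → ℝ | (∀ i, 0 < p i) ∧ ∑ i, p i = 1} := by
  have hsum : IsLinearMap ℝ fun p : ι → ℝ => ∑ i, p i :=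
    ⟨fun _ _ => sum_add_distrib, fun _ _ => (mul_sum _ _ _).symm⟩
  have hS : {p : ι → ℝ | (∀ i, 0 < p i) ∧ ∑ i, p i = 1} =
      (Set.univ.pi fun _ => Set.Ioi 0) ∩ {p | ∑ i, p i = 1} := by
    ext p
    simp
  rw [hS]
  exact (convex_pi fun _ _ => convex_Ioi 0).inter (convex_hyperplane hsum 1)

open Real in
/-- `x ^ q = exp (q * log x)`, and `q * log x` is convex for `q ≤ 0`. -/
theorem convexOn_rpow_Ioi_of_nonpos {q : ℝ} (hq : q ≤ 0) :
    ConvexOn ℝ (Set.Ioi 0) fun x : ℝ => x ^ q := by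
  have hlog : ConvexOn ℝ (Set.Ioi 0) fun x => q * log x := by
    simpa using strictConcaveOn_log_Ioi.concaveOn.neg.smul (neg_nonneg.2 hq)
  exact (convexOn_exp.comp_of_monotone exp_monotone hlog).congr fun x hx => by
    simp [rpow_def_of_pos hx, mul_comm]

theorem gab_entropy_concave_general
    (n : ℕ) (α β : ℝ) (hα : α < 0) (hβ : 0 < β) (hαβ : 1 < α + β)
    (ψ : ℝ → ℝ) (hmono : Monotone ψ) (hconv : ConvexOn ℝ Set.univ ψ) :
    ConcaveOn ℝ {p : Fin n → ℝ | (∀ i, 0 < p i) ∧ ∑ i, p i = 1}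
      (fun p => (1 / (α * β)) * ψ (∑ i, p i ^ α)
        - (1 / (β * (α + β))) * ψ (∑ i, p i ^ (α + β))) := by
  have hψ_sum : ∀ φ : ℝ → ℝ, ConvexOn ℝ (Set.Ioi 0) φ →
      ConvexOn ℝ {p : Fin n → ℝ | (∀ i, 0 < p i) ∧ ∑ i, p i = 1} fun p => ψ (∑ i, φ (p i)) :=
    fun φ hφ => (hconv.comp_of_monotone hmono hφ.sum_comp_pi).subset
      (fun p hp i _ => hp.1 i) (convex_positive_simplex (Fin n))
  have h₁ := hψ_sum _ (convexOn_rpow_Ioi_of_nonpos hα.le)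
  have h₂ := hψ_sum _ ((convexOn_rpow hαβ.le).subset Set.Ioi_subset_Ici_self (convex_Ioi 0))
  have hc₁ : 1 / (α * β) ≤ 0 := one_div_nonpos.2 (mul_neg_of_neg_of_pos hα hβ).le
  have hc₂ : 0 ≤ 1 / (β * (α + β)) := one_div_nonneg.2 (mul_pos hβ (by linarith)).le
  exact (h₁.concaveOn_const_mul_of_nonpos hc₁).sub (h₂.smul hc₂)

theorem gab_entropy_concave
    (n : ℕ) (α β : ℝ) (hα : α < 0) (hβ : 0 < β) (hαβ : 1 < α + β)
    (ψ : ℝ → ℝ) (hmono : Monotone ψ) (hconv : ConvexOn ℝ Set.univ ψ)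
    (hΨmono : Monotone (fun x : ℝ => ψ (Real.exp x)))
    (hΨconv : ConvexOn ℝ Set.univ (fun x : ℝ => ψ (Real.exp x))) :
    ConcaveOn ℝ {p : Fin n → ℝ | (∀ i, 0 < p i) ∧ ∑ i, p i = 1}
      (fun p => (1 / (α * β)) * ψ (∑ i, p i ^ α)
        - (1 / (β * (α + β))) * ψ (∑ i, p i ^ (α + β))) :=
  gab_entropy_concave_general n α β hα hβ hαβ ψ hmono hconv
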